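/- Comparison of the Sobolev–Bregman form and the quadratic form: let d ∈ ℕ, 0 < α < min(d,2), 1 < p < ∞. Then for every Borel measurable u : ℝ^d → ℝ one has, as inequalities in [0,∞]: (4(p−1)/p²) E_2[u^⟨p/2⟩] ≤ E_p[u] ≤ 2 E_2[u^⟨p/2⟩], where E_2[v] := (1/2) ∫_{ℝ^d} ∫_{ℝ^d} (v(x) − v(y))² ν(x,y) dy dx and u^⟨p/2⟩(x) := |u(x)|^{p/2} sgn(u(x)). -/

import Mathlib

open MeasureTheory Real Filter Topology
open scoped ENNReal NNReal

noncomputable section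

/-- The signed power `a^⟨k⟩ := |a|^k sgn a` (with `0^k := 0`). -/
def sgnPow (a k : ℝ) : ℝ := |a| ^ k * Real.sign a

/-- The Bregman divergence `F_p(a,b) := |b|^p - |a|^p - p a^⟨p-1⟩ (b-a)`. -/
def bregmanF (p a b : ℝ) : ℝ := |b| ^ p - |a| ^ p - p * sgnPow a (p - 1) * (b - a)

/-- The constant `A_{d,-α} = 2^α Γ((d+α)/2) π^{-d/2} / |Γ(-α/2)|`. -/
def coefA (d : ℕ) (α : ℝ) : ℝ :=
  2 ^ α * Real.Gamma (((d : ℝ) + α) / 2) * Real.pi ^ (-(d : ℝ) / 2) / |Real.Gamma (-α / 2)|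

/-- The kernel `ν(x,y) = A_{d,-α} |x-y|^{-d-α}` of the fractional Laplacian. -/
def nuK (d : ℕ) (α : ℝ) (x y : EuclideanSpace ℝ (Fin d)) : ℝ :=
  coefA d α * ‖x - y‖ ^ (-(d : ℝ) - α)

/-- The Hardy constant `κ_β`.  Note that `Real.Gamma 0 = 0` and division by `0` is `0`
in Lean, so this formula automatically gives `κ_0 = 0` and `κ_{d-α} = 0`. -/
def kappaC (d : ℕ) (α β : ℝ) : ℝ :=
  2 ^ α * Real.Gamma ((β + α) / 2) * Real.Gamma (((d : ℝ) - β) / 2) /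
    (Real.Gamma (β / 2) * Real.Gamma (((d : ℝ) - β - α) / 2))

/-- The Sobolev–Bregman form `E_p[u]`, an element of `[0,∞]`
(the integrand is nonnegative). -/
def formEp (d : ℕ) (α p : ℝ) (u : EuclideanSpace ℝ (Fin d) → ℝ) : ℝ≥0∞ :=
  (1 / 2) * ∫⁻ x, ∫⁻ y, ENNReal.ofReal
    ((u x - u y) * (sgnPow (u x) (p - 1) - sgnPow (u y) (p - 1)) * nuK d α x y)

/-- The Hardy integral `∫ |u(x)|^p |x|^{-α} dx`, an element of `[0,∞]`. -/
def hardyI (d : ℕ) (α p : ℝ) (u : EuclideanSpace ℝ (Fin d) → ℝ) : ℝ≥0∞ :=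
  ∫⁻ x, ENNReal.ofReal (|u x| ^ p * ‖x‖ ^ (-α))

end


section SpAux
open intervalIntegral

lemma rpow_split {x s t : ℝ} (hx : 0 ≤ x) (h1 : s + t = 1) : x ^ s * x ^ t = x := by
  rw [← Real.rpow_add' hx (by rw [h1]; norm_num), h1, Real.rpow_one]

lemma amgm {q x y : ℝ} (hq0 : 0 < q) (hq2 : q < 2) (hx : 0 ≤ x) (hy : 0 ≤ y) :
    2 * (x * y) ≤ x ^ q * y ^ (2 - q) + x ^ (2 - q) * y ^ q := by
  set A := x ^ (q / 2) * y ^ ((2 - q) / 2) with hA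
  set B := x ^ ((2 - q) / 2) * y ^ (q / 2) with hB
  have e1 : x ^ (q / 2) * x ^ ((2 - q) / 2) = x := rpow_split hx (by ring)
  have e2 : y ^ ((2 - q) / 2) * y ^ (q / 2) = y := rpow_split hy (by ring)
  have hAB : A * B = x * y := by
    calc A * B = (x ^ (q / 2) * x ^ ((2 - q) / 2)) * (y ^ ((2 - q) / 2) * y ^ (q / 2)) := by
          rw [hA, hB]; ring
      _ = x * y := by rw [e1, e2]
  have ex1 : x ^ (q / 2) * x ^ (q / 2) = x ^ q := by
    rw [← Real.rpow_add' hx (by simpa using hq0.ne')]; ring_nf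
  have ex2 : x ^ ((2 - q) / 2) * x ^ ((2 - q) / 2) = x ^ (2 - q) := by
    rw [← Real.rpow_add' hx (by intro h; apply hq2.ne; linarith)]; ring_nf
  have ey1 : y ^ (q / 2) * y ^ (q / 2) = y ^ q := by
    rw [← Real.rpow_add' hy (by simpa using hq0.ne')]; ring_nf
  have ey2 : y ^ ((2 - q) / 2) * y ^ ((2 - q) / 2) = y ^ (2 - q) := by
    rw [← Real.rpow_add' hy (by intro h; apply hq2.ne; linarith)]; ring_nf
  have hA2 : A ^ 2 = x ^ q * y ^ (2 - q) := by
    calc A ^ 2 = (x ^ (q / 2) * x ^ (q / 2)) * (y ^ ((2 - q) / 2) * y ^ ((2 - q) / 2)) := by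
          rw [hA]; ring
      _ = x ^ q * y ^ (2 - q) := by rw [ex1, ey2]
  have hB2 : B ^ 2 = x ^ (2 - q) * y ^ q := by
    calc B ^ 2 = (x ^ ((2 - q) / 2) * x ^ ((2 - q) / 2)) * (y ^ (q / 2) * y ^ (q / 2)) := by
          rw [hB]; ring
      _ = x ^ (2 - q) * y ^ q := by rw [ex2, ey1]
  nlinarith [two_mul_le_add_sq A B]

lemma rpow_self_mul {x q : ℝ} (hx : 0 ≤ x) : x ^ q * x ^ (2 - q) = x ^ 2 := by
  rw [← Real.rpow_add' hx (by norm_num)]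
  norm_num

lemma cross_le {q x y : ℝ} (hq0 : 0 < q) (hq2 : q < 2) (hx : 0 ≤ x) (hy : 0 ≤ y) :
    x ^ q * y ^ (2 - q) + x ^ (2 - q) * y ^ q ≤ x ^ 2 + y ^ 2 := by
  have ex := rpow_self_mul (q := q) hx
  have ey := rpow_self_mul (q := q) hy
  rcases le_total x y with h | h
  · nlinarith [mul_nonneg (sub_nonneg.2 (Real.rpow_le_rpow hx h hq0.le))
      (sub_nonneg.2 (Real.rpow_le_rpow hx h (by linarith : (0:ℝ) ≤ 2 - q)))]
  · nlinarith [mul_nonneg (sub_nonneg.2 (Real.rpow_le_rpow hy h hq0.le))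
      (sub_nonneg.2 (Real.rpow_le_rpow hy h (by linarith : (0:ℝ) ≤ 2 - q)))]

lemma lint_rpow {q : ℝ} (hq : -1 < q) {d c : ℝ} (hd : 0 ≤ d) (hdc : d ≤ c) :
    ∫⁻ s in Set.Ioc d c, ENNReal.ofReal (s ^ q) =
      ENNReal.ofReal ((c ^ (q + 1) - d ^ (q + 1)) / (q + 1)) := by
  have hint : IntegrableOn (fun s : ℝ => s ^ q) (Set.Ioc d c) := by
    have := (intervalIntegrable_rpow' (a := d) (b := c) hq)
    exact (intervalIntegrable_iff_integrableOn_Ioc_of_le hdc).1 this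
  have hnn : 0 ≤ᵐ[volume.restrict (Set.Ioc d c)] fun s : ℝ => s ^ q := by
    refine (ae_restrict_iff' measurableSet_Ioc).2 (ae_of_all _ fun s hs => ?_)
    exact Real.rpow_nonneg (le_trans hd hs.1.le) q
  rw [← MeasureTheory.ofReal_integral_eq_lintegral_ofReal hint hnn]
  congr 1
  rw [← integral_of_le hdc, integral_rpow (Or.inl hq)]

lemma cs_core {q : ℝ} (hq0 : 0 < q) (hq2 : q < 2) {d c : ℝ} (hd : 0 ≤ d) (hdc : d ≤ c) :
    q * (2 - q) * (c - d) ^ 2 ≤ (c ^ q - d ^ q) * (c ^ (2 - q) - d ^ (2 - q)) := by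
  rcases hdc.eq_or_lt with rfl | hlt
  · simp
  set μ := volume.restrict (Set.Ioc d c) with hμ
  set f : ℝ → ℝ≥0∞ := fun s => ENNReal.ofReal (s ^ ((q - 1) / 2)) with hf
  set g : ℝ → ℝ≥0∞ := fun s => ENNReal.ofReal (s ^ ((1 - q) / 2)) with hg
  have hmf : AEMeasurable f μ :=
    ((measurable_id.pow_const ((q - 1) / 2)).ennreal_ofReal).aemeasurable
  have hmg : AEMeasurable g μ :=
    ((measurable_id.pow_const ((1 - q) / 2)).ennreal_ofReal).aemeasurable
  have hconj : Real.HolderConjugate 2 2 := Real.holderConjugate_iff.mpr ⟨one_lt_two, by norm_num⟩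
  have holder := ENNReal.lintegral_mul_le_Lp_mul_Lq μ hconj hmf hmg
  have hfg : ∫⁻ s, (f * g) s ∂μ = ENNReal.ofReal (c - d) := by
    rw [hμ]
    rw [setLIntegral_congr_fun_ae measurableSet_Ioc
      (ae_of_all _ (fun s hs => ?_) : ∀ᵐ s ∂volume, s ∈ Set.Ioc d c → (f * g) s = 1)]
    · simp [Real.volume_Ioc]
    · have hs0 : 0 < s := lt_of_le_of_lt hd hs.1
      show ENNReal.ofReal (s ^ ((q - 1) / 2)) * ENNReal.ofReal (s ^ ((1 - q) / 2)) = 1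
      rw [← ENNReal.ofReal_mul (Real.rpow_nonneg hs0.le _), ← Real.rpow_add hs0]
      have e : (q - 1) / 2 + (1 - q) / 2 = 0 := by ring
      rw [e, Real.rpow_zero, ENNReal.ofReal_one]
  have hf2 : ∫⁻ s, f s ^ (2:ℝ) ∂μ = ENNReal.ofReal ((c ^ q - d ^ q) / q) := by
    rw [hμ]
    rw [setLIntegral_congr_fun_ae measurableSet_Ioc
      (ae_of_all _ (fun s hs => ?_) :
        ∀ᵐ s ∂volume, s ∈ Set.Ioc d c → f s ^ (2:ℝ) = ENNReal.ofReal (s ^ (q - 1)))]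
    · rw [lint_rpow (by linarith) hd hdc]
      norm_num
    · have hs0 : 0 < s := lt_of_le_of_lt hd hs.1
      show ENNReal.ofReal (s ^ ((q - 1) / 2)) ^ (2:ℝ) = ENNReal.ofReal (s ^ (q - 1))
      rw [ENNReal.ofReal_rpow_of_pos (Real.rpow_pos_of_pos hs0 _), ← Real.rpow_mul hs0.le]
      have e : (q - 1) / 2 * 2 = q - 1 := by ring
      rw [e]
  have hg2 : ∫⁻ s, g s ^ (2:ℝ) ∂μ = ENNReal.ofReal ((c ^ (2 - q) - d ^ (2 - q)) / (2 - q)) := by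
    rw [hμ]
    rw [setLIntegral_congr_fun_ae measurableSet_Ioc
      (ae_of_all _ (fun s hs => ?_) :
        ∀ᵐ s ∂volume, s ∈ Set.Ioc d c → g s ^ (2:ℝ) = ENNReal.ofReal (s ^ (1 - q)))]
    · rw [lint_rpow (by linarith) hd hdc]
      ring_nf
    · have hs0 : 0 < s := lt_of_le_of_lt hd hs.1
      show ENNReal.ofReal (s ^ ((1 - q) / 2)) ^ (2:ℝ) = ENNReal.ofReal (s ^ (1 - q))
      rw [ENNReal.ofReal_rpow_of_pos (Real.rpow_pos_of_pos hs0 _), ← Real.rpow_mul hs0.le]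
      have e : (1 - q) / 2 * 2 = 1 - q := by ring
      rw [e]
  rw [hfg, hf2, hg2] at holder
  set A := (c ^ q - d ^ q) / q with hA
  set B := (c ^ (2 - q) - d ^ (2 - q)) / (2 - q) with hB
  have hAnn : 0 ≤ A := div_nonneg (by linarith [Real.rpow_le_rpow hd hdc hq0.le]) hq0.le
  have hBnn : 0 ≤ B :=
    div_nonneg (by linarith [Real.rpow_le_rpow hd hdc (by linarith : (0:ℝ) ≤ 2 - q)])
      (by linarith)
  have hsq := ENNReal.rpow_le_rpow holder (by norm_num : (0:ℝ) ≤ 2)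
  rw [ENNReal.mul_rpow_of_nonneg _ _ (by norm_num : (0:ℝ) ≤ 2),
    ← ENNReal.rpow_mul, ← ENNReal.rpow_mul] at hsq
  norm_num at hsq
  rw [← ENNReal.ofReal_pow (by linarith : (0:ℝ) ≤ c - d), ← ENNReal.ofReal_mul hAnn] at hsq
  have hreal : (c - d) ^ 2 ≤ A * B :=
    (ENNReal.ofReal_le_ofReal_iff (mul_nonneg hAnn hBnn)).1 hsq
  have hq0' : q ≠ 0 := hq0.ne'
  have hq2' : (2:ℝ) - q ≠ 0 := by intro h; apply hq2.ne; linarith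
  have hfin : q * (2 - q) * (A * B) = (c ^ q - d ^ q) * (c ^ (2 - q) - d ^ (2 - q)) := by
    rw [hA, hB]; field_simp
  calc q * (2 - q) * (c - d) ^ 2 ≤ q * (2 - q) * (A * B) := by
        exact mul_le_mul_of_nonneg_left hreal (mul_nonneg hq0.le (by linarith))
    _ = _ := hfin

lemma core_nonneg {q x y : ℝ} (hq0 : 0 < q) (hq2 : q < 2) (hy : 0 ≤ y) (hxy : y ≤ x) :
    q * (2 - q) * (x - y) ^ 2 ≤ (x ^ q - y ^ q) * (x ^ (2 - q) - y ^ (2 - q)) ∧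
      (x ^ q - y ^ q) * (x ^ (2 - q) - y ^ (2 - q)) ≤ 2 * (x - y) ^ 2 := by
  have hx : 0 ≤ x := hy.trans hxy
  refine ⟨cs_core hq0 hq2 hy hxy, ?_⟩
  have h1 := amgm hq0 hq2 hx hy
  have ex := rpow_self_mul (q := q) hx
  have ey := rpow_self_mul (q := q) hy
  nlinarith [sq_nonneg (x - y)]

lemma core_mixed {q x y : ℝ} (hq0 : 0 < q) (hq2 : q < 2) (hx : 0 ≤ x) (hy : 0 ≤ y) :
    q * (2 - q) * (x + y) ^ 2 ≤ (x ^ q + y ^ q) * (x ^ (2 - q) + y ^ (2 - q)) ∧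
      (x ^ q + y ^ q) * (x ^ (2 - q) + y ^ (2 - q)) ≤ 2 * (x + y) ^ 2 := by
  have h1 := amgm hq0 hq2 hx hy
  have h2 := cross_le hq0 hq2 hx hy
  have ex := rpow_self_mul (q := q) hx
  have ey := rpow_self_mul (q := q) hy
  have hq1 : q * (2 - q) ≤ 1 := by nlinarith [sq_nonneg (1 - q)]
  constructor
  · nlinarith [sq_nonneg (x + y), mul_nonneg hx hy, mul_nonneg hq0.le (by linarith : (0:ℝ) ≤ 2 - q)]
  · nlinarith [mul_nonneg hx hy]


lemma sgnPow_of_nonneg {a : ℝ} (k : ℝ) (hk : k ≠ 0) (ha : 0 ≤ a) : sgnPow a k = a ^ k := by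
  rcases ha.eq_or_lt with h | h
  · rw [← h]; simp [sgnPow, Real.sign_zero, Real.zero_rpow hk]
  · unfold sgnPow; rw [abs_of_pos h, Real.sign_of_pos h, mul_one]

lemma sgnPow_neg (a k : ℝ) : sgnPow (-a) k = - sgnPow a k := by
  unfold sgnPow; rw [abs_neg, Real.sign_neg]; ring

lemma sgnPow_one (a : ℝ) : sgnPow a 1 = a := by
  rcases lt_trichotomy a 0 with h | h | h
  · simp [sgnPow, Real.sign_of_neg h, abs_of_neg h]
  · simp [sgnPow, h, Real.sign_zero]
  · simp [sgnPow, Real.sign_of_pos h, abs_of_pos h]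

lemma sgnPow_sgnPow (a s t : ℝ) : sgnPow (sgnPow a s) t = sgnPow a (s * t) := by
  rcases lt_trichotomy a 0 with h | h | h
  · have h1 : sgnPow a s = -(|a| ^ s) := by simp [sgnPow, Real.sign_of_neg h]
    have h2 : (0:ℝ) < |a| ^ s := Real.rpow_pos_of_pos (abs_pos.2 h.ne) s
    rw [h1, sgnPow_neg]
    simp only [sgnPow, abs_of_pos h2, Real.sign_of_pos h2, Real.sign_of_neg h,
      ← Real.rpow_mul (abs_nonneg a), mul_one]
    ring
  · simp [sgnPow, h, Real.sign_zero]
  · have h1 : sgnPow a s = |a| ^ s := by simp [sgnPow, Real.sign_of_pos h]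
    have h2 : (0:ℝ) < |a| ^ s := Real.rpow_pos_of_pos (abs_pos.2 h.ne') s
    rw [h1]
    simp [sgnPow, abs_of_pos h2, Real.sign_of_pos h2, Real.sign_of_pos h,
      ← Real.rpow_mul (abs_nonneg a)]

lemma core_sorted {q : ℝ} (hq0 : 0 < q) (hq2 : q < 2) {c d : ℝ} (hdc : d ≤ c) :
    q * (2 - q) * (c - d) ^ 2 ≤
        (sgnPow c q - sgnPow d q) * (sgnPow c (2 - q) - sgnPow d (2 - q)) ∧
      (sgnPow c q - sgnPow d q) * (sgnPow c (2 - q) - sgnPow d (2 - q)) ≤ 2 * (c - d) ^ 2 := by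
  have hq0' : q ≠ 0 := hq0.ne'
  have hq2' : (2:ℝ) - q ≠ 0 := by intro h; apply hq2.ne; linarith
  rcases le_or_gt 0 d with hd | hd
  · have hc : 0 ≤ c := hd.trans hdc
    rw [sgnPow_of_nonneg q hq0' hc, sgnPow_of_nonneg q hq0' hd,
      sgnPow_of_nonneg _ hq2' hc, sgnPow_of_nonneg _ hq2' hd]
    exact core_nonneg hq0 hq2 hd hdc
  rcases le_or_gt 0 c with hc | hc
  · -- d < 0 ≤ c
    have hyd : (0:ℝ) ≤ -d := by linarith
    have e1 : sgnPow d q = -((-d) ^ q) := by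
      rw [show d = -(-d) by ring, sgnPow_neg, sgnPow_of_nonneg q hq0' hyd, neg_neg]
    have e2 : sgnPow d (2 - q) = -((-d) ^ (2 - q)) := by
      rw [show d = -(-d) by ring, sgnPow_neg, sgnPow_of_nonneg _ hq2' hyd, neg_neg]
    rw [sgnPow_of_nonneg q hq0' hc, sgnPow_of_nonneg _ hq2' hc, e1, e2]
    obtain ⟨l, u⟩ := core_mixed (x := c) (y := -d) hq0 hq2 hc hyd
    constructor
    · calc q * (2 - q) * (c - d) ^ 2 = q * (2 - q) * (c + -d) ^ 2 := by ring
        _ ≤ (c ^ q + (-d) ^ q) * (c ^ (2 - q) + (-d) ^ (2 - q)) := l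
        _ = (c ^ q - -(-d) ^ q) * (c ^ (2 - q) - -(-d) ^ (2 - q)) := by ring
    · calc (c ^ q - -(-d) ^ q) * (c ^ (2 - q) - -(-d) ^ (2 - q))
          = (c ^ q + (-d) ^ q) * (c ^ (2 - q) + (-d) ^ (2 - q)) := by ring
        _ ≤ 2 * (c + -d) ^ 2 := u
        _ = 2 * (c - d) ^ 2 := by ring
  · -- d ≤ c < 0
    have hyc : (0:ℝ) ≤ -c := by linarith
    have hxd : -c ≤ -d := by linarith
    have e1 : sgnPow d q = -((-d) ^ q) := by
      rw [show d = -(-d) by ring, sgnPow_neg, sgnPow_of_nonneg q hq0' (by linarith), neg_neg]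
    have e2 : sgnPow d (2 - q) = -((-d) ^ (2 - q)) := by
      rw [show d = -(-d) by ring, sgnPow_neg, sgnPow_of_nonneg _ hq2' (by linarith), neg_neg]
    have e3 : sgnPow c q = -((-c) ^ q) := by
      rw [show c = -(-c) by ring, sgnPow_neg, sgnPow_of_nonneg q hq0' hyc, neg_neg]
    have e4 : sgnPow c (2 - q) = -((-c) ^ (2 - q)) := by
      rw [show c = -(-c) by ring, sgnPow_neg, sgnPow_of_nonneg _ hq2' hyc, neg_neg]
    rw [e1, e2, e3, e4]
    obtain ⟨l, u⟩ := core_nonneg (x := -d) (y := -c) hq0 hq2 hyc hxd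
    constructor
    · calc q * (2 - q) * (c - d) ^ 2 = q * (2 - q) * (-d - -c) ^ 2 := by ring
        _ ≤ ((-d) ^ q - (-c) ^ q) * ((-d) ^ (2 - q) - (-c) ^ (2 - q)) := l
        _ = (-(-c) ^ q - -(-d) ^ q) * (-(-c) ^ (2 - q) - -(-d) ^ (2 - q)) := by ring
    · calc (-(-c) ^ q - -(-d) ^ q) * (-(-c) ^ (2 - q) - -(-d) ^ (2 - q))
          = ((-d) ^ q - (-c) ^ q) * ((-d) ^ (2 - q) - (-c) ^ (2 - q)) := by ring
        _ ≤ 2 * (-d - -c) ^ 2 := u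
        _ = 2 * (c - d) ^ 2 := by ring

lemma core {q : ℝ} (hq0 : 0 < q) (hq2 : q < 2) (c d : ℝ) :
    q * (2 - q) * (c - d) ^ 2 ≤
        (sgnPow c q - sgnPow d q) * (sgnPow c (2 - q) - sgnPow d (2 - q)) ∧
      (sgnPow c q - sgnPow d q) * (sgnPow c (2 - q) - sgnPow d (2 - q)) ≤ 2 * (c - d) ^ 2 := by
  rcases le_total d c with h | h
  · exact core_sorted hq0 hq2 h
  · obtain ⟨l, u⟩ := core_sorted hq0 hq2 h
    constructor <;> nlinarith [l, u]

lemma sp_key {p : ℝ} (hp : 1 < p) (a b : ℝ) :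
    4 * (p - 1) / p ^ 2 * (sgnPow a (p / 2) - sgnPow b (p / 2)) ^ 2 ≤
        (a - b) * (sgnPow a (p - 1) - sgnPow b (p - 1)) ∧
      (a - b) * (sgnPow a (p - 1) - sgnPow b (p - 1)) ≤
        2 * (sgnPow a (p / 2) - sgnPow b (p / 2)) ^ 2 := by
  have hp0 : (0:ℝ) < p := by linarith
  set q : ℝ := 2 / p with hq
  have hq0 : 0 < q := by positivity
  have hq2 : q < 2 := by rw [hq, div_lt_iff₀ hp0]; linarith
  have ea : sgnPow (sgnPow a (p / 2)) q = a := by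
    rw [sgnPow_sgnPow, show p / 2 * q = 1 by rw [hq]; field_simp, sgnPow_one]
  have eb : sgnPow (sgnPow b (p / 2)) q = b := by
    rw [sgnPow_sgnPow, show p / 2 * q = 1 by rw [hq]; field_simp, sgnPow_one]
  have ea2 : sgnPow (sgnPow a (p / 2)) (2 - q) = sgnPow a (p - 1) := by
    rw [sgnPow_sgnPow, show p / 2 * (2 - q) = p - 1 by rw [hq]; field_simp]
  have eb2 : sgnPow (sgnPow b (p / 2)) (2 - q) = sgnPow b (p - 1) := by
    rw [sgnPow_sgnPow, show p / 2 * (2 - q) = p - 1 by rw [hq]; field_simp]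
  have hconst : q * (2 - q) = 4 * (p - 1) / p ^ 2 := by
    rw [hq]; field_simp; ring
  obtain ⟨l, u⟩ := core hq0 hq2 (sgnPow a (p / 2)) (sgnPow b (p / 2))
  rw [ea, eb, ea2, eb2, hconst] at l
  rw [ea, eb, ea2, eb2] at u
  exact ⟨l, u⟩

end SpAux

/-- The quadratic form `E_2[v] = (1/2)∫∫ (v(x)-v(y))² ν(x,y) dy dx`. -/
noncomputable def form2 (d : ℕ) (α : ℝ) (v : EuclideanSpace ℝ (Fin d) → ℝ) : ℝ≥0∞ :=
  (1 / 2) * ∫⁻ x, ∫⁻ y, ENNReal.ofReal ((v x - v y) ^ 2 * nuK d α x y)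

/-- Comparison of the Sobolev–Bregman form `E_p[u]` with the quadratic form
`E_2[u^⟨p/2⟩]`, as inequalities in `[0,∞]`. -/
theorem formEp_comparison_form2 (d : ℕ) (α p : ℝ)
    (hα0 : 0 < α) (hαd : α < d) (hα2 : α < 2) (hp1 : 1 < p)
    (u : EuclideanSpace ℝ (Fin d) → ℝ) (hu : Measurable u) :
    ENNReal.ofReal (4 * (p - 1) / p ^ 2) * form2 d α (fun x => sgnPow (u x) (p / 2))
        ≤ formEp d α p u ∧
      formEp d α p u ≤ 2 * form2 d α (fun x => sgnPow (u x) (p / 2)) := by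
  have hnu : ∀ x y : EuclideanSpace ℝ (Fin d), 0 ≤ nuK d α x y := by
    intro x y
    have h1 : 0 < ((d : ℝ) + α) / 2 := by positivity
    have h2 := Real.Gamma_pos_of_pos h1
    unfold nuK coefA
    positivity
  have hK : (0:ℝ) ≤ 4 * (p - 1) / p ^ 2 := by
    apply div_nonneg (by linarith) (by positivity)
  constructor
  · simp only [form2, formEp]
    rw [← mul_assoc, mul_comm (ENNReal.ofReal (4 * (p - 1) / p ^ 2)) (1 / 2 : ℝ≥0∞), mul_assoc]
    refine mul_le_mul_right ?_ _
    rw [← MeasureTheory.lintegral_const_mul' _ _ ENNReal.ofReal_ne_top]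
    refine lintegral_mono fun x => ?_
    rw [← MeasureTheory.lintegral_const_mul' _ _ ENNReal.ofReal_ne_top]
    refine lintegral_mono fun y => ?_
    rw [← ENNReal.ofReal_mul hK]
    refine ENNReal.ofReal_le_ofReal ?_
    have hkey := mul_le_mul_of_nonneg_right (sp_key hp1 (u x) (u y)).1 (hnu x y)
    calc 4 * (p - 1) / p ^ 2 * ((sgnPow (u x) (p / 2) - sgnPow (u y) (p / 2)) ^ 2 * nuK d α x y)
        = 4 * (p - 1) / p ^ 2 * (sgnPow (u x) (p / 2) - sgnPow (u y) (p / 2)) ^ 2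
            * nuK d α x y := by ring
      _ ≤ (u x - u y) * (sgnPow (u x) (p - 1) - sgnPow (u y) (p - 1)) * nuK d α x y := hkey
  · simp only [form2, formEp]
    rw [← mul_assoc, mul_comm (2 : ℝ≥0∞) (1 / 2 : ℝ≥0∞), mul_assoc]
    refine mul_le_mul_right ?_ _
    have e2 : (2 : ℝ≥0∞) = ENNReal.ofReal 2 := by norm_num
    refine le_trans ?_ (mul_le_mul_left (le_of_eq e2.symm) _)
    rw [← MeasureTheory.lintegral_const_mul' _ _ ENNReal.ofReal_ne_top]
    refine lintegral_mono fun x => ?_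
    rw [← MeasureTheory.lintegral_const_mul' _ _ ENNReal.ofReal_ne_top]
    refine lintegral_mono fun y => ?_
    rw [← ENNReal.ofReal_mul (by norm_num : (0:ℝ) ≤ 2)]
    refine ENNReal.ofReal_le_ofReal ?_
    have hkey := mul_le_mul_of_nonneg_right (sp_key hp1 (u x) (u y)).2 (hnu x y)
    calc (u x - u y) * (sgnPow (u x) (p - 1) - sgnPow (u y) (p - 1)) * nuK d α x y
        ≤ 2 * (sgnPow (u x) (p / 2) - sgnPow (u y) (p / 2)) ^ 2 * nuK d α x y := hkey
      _ = 2 * ((sgnPow (u x) (p / 2) - sgnPow (u y) (p / 2)) ^ 2 * nuK d α x y) := by ring
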